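/- Let A ∈ GL(2,ℤ) be elliptic, i.e. 0 ≤ tr(A)² < 4·det(A). Then for every ā ∈ 𝕋², the element (A,ā) is strongly reversible in G = GL(2,ℤ) ⋉ 𝕋². -/

import Mathlib

/-! An elliptic `A ∈ GL(2,ℤ)` has determinant `1` and trace `t ∈ {-1, 0, 1}`, so the binary
form `det (v, A v)`, of discriminant `t² - 4 ∈ {-3, -4}`, takes the value `±1` by Lagrange
reduction. In the basis `v, A v` the matrix `A` becomes the companion matrix of `X² - t X + 1`,
which the swap of the basis vectors reverses; this gives an involution `R` with `R A R = A⁻¹`.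
Since `A - 1` is invertible over `ℝ`, every `(A, ā)` is conjugate by a translation to `(A, 0)`,
and conjugating `(R, 0)` back by the same translation gives the reversing involution. -/

noncomputable section

abbrev V : Type := Fin 2 → ℝ

def L : AddSubgroup V where
  carrier := {x | ∀ i, ∃ n : ℤ, x i = (n : ℝ)}
  zero_mem' := fun i => ⟨0, by simp⟩
  add_mem' := by
    rintro a b ha hb i
    obtain ⟨m, hm⟩ := ha i
    obtain ⟨n, hn⟩ := hb i
    exact ⟨m + n, by simp [hm, hn]⟩
  neg_mem' := by
    rintro a ha i
    obtain ⟨m, hm⟩ := ha i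
    exact ⟨-m, by simp [hm]⟩

abbrev T2 := V ⧸ L

def actV (A : Matrix (Fin 2) (Fin 2) ℤ) : V →+ V :=
  (Matrix.mulVecLin (A.map (Int.cast : ℤ → ℝ))).toAddMonoidHom

lemma actV_mem (A : Matrix (Fin 2) (Fin 2) ℤ) : L ≤ L.comap (actV A) := by
  intro x hx
  show actV A x ∈ L
  intro i
  refine ⟨∑ j, A i j * Classical.choose (hx j), ?_⟩
  show (A.map (Int.cast : ℤ → ℝ)).mulVec x i = _
  simp only [Matrix.mulVec, dotProduct, Matrix.map_apply]
  push_cast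
  exact Finset.sum_congr rfl fun j _ =>
    congrArg (fun t => ((A i j : ℝ)) * t) (Classical.choose_spec (hx j))

/-- The action of an integer matrix on the torus `T2`. -/
def act (A : Matrix (Fin 2) (Fin 2) ℤ) : T2 →+ T2 :=
  QuotientAddGroup.map L L (actV A) (actV_mem A)

abbrev GL2 := (Matrix (Fin 2) (Fin 2) ℤ)ˣ

/-- Multiplication in the group `G = GL(2,ℤ) ⋉ 𝕋²`. -/
def Gmul (p q : GL2 × T2) : GL2 × T2 :=
  (p.1 * q.1, act (p.1 : Matrix (Fin 2) (Fin 2) ℤ) q.2 + p.2)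

/-- Inversion in the group `G = GL(2,ℤ) ⋉ 𝕋²`. -/
def Ginv (p : GL2 × T2) : GL2 × T2 :=
  (p.1⁻¹, -act ((p.1⁻¹ : GL2) : Matrix (Fin 2) (Fin 2) ℤ) p.2)

open scoped Matrix

def quadForm (α β γ x y : ℤ) : ℤ := α * x ^ 2 + β * x * y + γ * y ^ 2

def quadPolar (α β γ x y s t : ℤ) : ℤ := 2 * α * x * s + β * (x * t + y * s) + 2 * γ * y * t

section QuadForm

variable {α β γ : ℤ}

theorem quadForm_pos (hα : 0 < α) (hΔ : β ^ 2 - 4 * α * γ < 0) {x y : ℤ} (hxy : IsCoprime x y) :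
    0 < quadForm α β γ x y := by
  have hsq : 4 * α * quadForm α β γ x y =
      (2 * α * x + β * y) ^ 2 - (β ^ 2 - 4 * α * γ) * y ^ 2 := by
    unfold quadForm; ring
  suffices 0 < (2 * α * x + β * y) ^ 2 - (β ^ 2 - 4 * α * γ) * y ^ 2 by
    rw [← hsq] at this; exact pos_of_mul_pos_right this (by positivity)
  rcases eq_or_ne y 0 with rfl | hy
  · have hx : x ≠ 0 := by rintro rfl; exact not_isCoprime_zero_zero hxy
    have : 0 < (2 * α * x) ^ 2 := by positivity
    simpa using this
  · have : 0 < y ^ 2 := by positivity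
    nlinarith [sq_nonneg (2 * α * x + β * y)]

theorem quadPolar_add_mul (x y s t q : ℤ) :
    quadPolar α β γ x y (s + q * x) (t + q * y)
      = quadPolar α β γ x y s t + 2 * quadForm α β γ x y * q := by
  unfold quadPolar quadForm; ring

theorem four_mul_quadForm_mul_quadForm_sub_quadPolar_sq (x y s t : ℤ) :
    4 * quadForm α β γ x y * quadForm α β γ s t - quadPolar α β γ x y s t ^ 2
      = (4 * α * γ - β ^ 2) * (x * t - y * s) ^ 2 := by
  unfold quadForm quadPolar; ring

theorem exists_abs_add_two_mul_mul_le (b : ℤ) {m : ℤ} (hm : 0 < m) :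
    ∃ q : ℤ, |b + 2 * m * q| ≤ m := by
  refine ⟨-((b + m) / (2 * m)), abs_le.mpr ⟨?_, ?_⟩⟩ <;>
  · have := Int.mul_ediv_add_emod (b + m) (2 * m)
    have := Int.emod_nonneg (b + m) (by omega : 2 * m ≠ 0)
    have := Int.emod_lt_of_pos (b + m) (by omega : 0 < 2 * m)
    linarith

/-- Lagrange reduction: a primitive vector `v` of minimal value `m` completes to a basis `v, w`
with `|B(v, w)| ≤ m ≤ Q(w)`, whence `3 m² ≤ -Δ ≤ 4`. -/
theorem exists_quadForm_eq_one (hα : 0 < α) (hΔ : -4 ≤ β ^ 2 - 4 * α * γ)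
    (hΔ' : β ^ 2 - 4 * α * γ < 0) : ∃ x y, quadForm α β γ x y = 1 := by
  obtain ⟨m, ⟨x, y, hxy, rfl⟩, hmin⟩ := Int.exists_least_of_bdd
    (P := fun n => ∃ x y, IsCoprime x y ∧ quadForm α β γ x y = n)
    ⟨0, by rintro _ ⟨x, y, hxy, rfl⟩; exact (quadForm_pos hα hΔ' hxy).le⟩
    ⟨_, 1, 0, isCoprime_one_left, rfl⟩
  have hm := quadForm_pos hα hΔ' hxy
  obtain ⟨u, v, huv⟩ := hxy
  obtain ⟨q, hq⟩ := exists_abs_add_two_mul_mul_le (quadPolar α β γ x y (-v) u) hm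
  have hdet : x * (u + q * y) - y * (-v + q * x) = 1 := by linear_combination huv
  have hmin' : quadForm α β γ x y ≤ quadForm α β γ (-v + q * x) (u + q * y) :=
    hmin _ ⟨_, _, ⟨-y, x, by linear_combination hdet⟩, rfl⟩
  have hB : quadPolar α β γ x y (-v + q * x) (u + q * y) ^ 2 ≤ quadForm α β γ x y ^ 2 := by
    rw [quadPolar_add_mul]
    exact sq_le_sq' (abs_le.mp hq).1 (abs_le.mp hq).2
  have key := four_mul_quadForm_mul_quadForm_sub_quadPolar_sq (α := α) (β := β) (γ := γ)
    x y (-v + q * x) (u + q * y)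
  rw [hdet] at key
  exact ⟨x, y, le_antisymm (by nlinarith) hm⟩

theorem exists_isUnit_quadForm (hΔ : -4 ≤ β ^ 2 - 4 * α * γ) (hΔ' : β ^ 2 - 4 * α * γ < 0) :
    ∃ x y, IsUnit (quadForm α β γ x y) := by
  rcases lt_trichotomy α 0 with hα | rfl | hα
  · obtain ⟨x, y, hxy⟩ := exists_quadForm_eq_one (α := -α) (β := -β) (γ := -γ) (by linarith)
      (by linarith) (by linarith)
    refine ⟨x, y, ?_⟩
    rw [← IsUnit.neg_iff, show -quadForm α β γ x y = quadForm (-α) (-β) (-γ) x y by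
      unfold quadForm; ring, hxy]
    exact isUnit_one
  · nlinarith [sq_nonneg β]
  · obtain ⟨x, y, hxy⟩ := exists_quadForm_eq_one hα hΔ hΔ'
    exact ⟨x, y, hxy ▸ isUnit_one⟩

end QuadForm

theorem mul_cyclicBasis_eq {R : Type*} [CommRing R] (A : Matrix (Fin 2) (Fin 2) R)
    (v : Fin 2 → R) :
    A * (Matrix.of ![v, A *ᵥ v])ᵀ = (Matrix.of ![v, A *ᵥ v])ᵀ * !![0, -A.det; 1, A.trace] := by
  ext i j
  fin_cases i <;> fin_cases j <;>
    simp [Matrix.mul_apply, Fin.sum_univ_two, Matrix.det_fin_two, Matrix.trace_fin_two] <;> ring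

theorem det_cyclicBasis (A : Matrix (Fin 2) (Fin 2) ℤ) (v : Fin 2 → ℤ) :
    (Matrix.of ![v, A *ᵥ v])ᵀ.det = quadForm (A 1 0) (A 1 1 - A 0 0) (-A 0 1) (v 0) (v 1) := by
  simp [Matrix.det_fin_two, quadForm]; ring

theorem det_sub_one_fin_two {R : Type*} [CommRing R] (M : Matrix (Fin 2) (Fin 2) R) :
    (M - 1).det = M.det - M.trace + 1 := by
  simp [Matrix.det_fin_two, Matrix.trace_fin_two]; ring

theorem det_eq_one_of_trace_sq_lt (A : GL2)
    (h : (A : Matrix (Fin 2) (Fin 2) ℤ).trace ^ 2 < 4 * (A : Matrix (Fin 2) (Fin 2) ℤ).det) :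
    (A : Matrix (Fin 2) (Fin 2) ℤ).det = 1 := by
  rcases Int.isUnit_iff.mp (Matrix.isUnits_det_units A) with hdet | hdet
  · exact hdet
  · rw [hdet] at h; nlinarith

def IsStronglyReversible {G : Type*} [Group G] (g : G) : Prop :=
  ∃ h : G, h * h = 1 ∧ h * g * h⁻¹ = g⁻¹

theorem IsStronglyReversible.conj {G : Type*} [Group G] {g : G} (hg : IsStronglyReversible g)
    (p : G) : IsStronglyReversible (p * g * p⁻¹) := by
  obtain ⟨h, hh, hgh⟩ := hg
  refine ⟨p * h * p⁻¹, by simp [mul_assoc, ← mul_assoc h h, hh], ?_⟩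
  simp only [mul_inv_rev, inv_inv, ← hgh]
  group

def swapGL : GL2 :=
  ⟨!![0, 1; 1, 0], !![0, 1; 1, 0], by simp [Matrix.one_fin_two], by simp [Matrix.one_fin_two]⟩

def companionGL (t : ℤ) : GL2 :=
  ⟨!![0, -1; 1, t], !![t, 1; -1, 0], by simp [Matrix.one_fin_two], by simp [Matrix.one_fin_two]⟩

theorem isStronglyReversible_companionGL (t : ℤ) : IsStronglyReversible (companionGL t) :=
  ⟨swapGL, Units.ext (by simp [swapGL, Matrix.one_fin_two]),
    Units.ext (by simp [swapGL, companionGL])⟩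

/-- `det (v, A v)` is a binary form of discriminant `tr² - 4 det`, so it takes a value `±1`,
and then the basis `v, A v` conjugates `A` to its companion matrix. -/
theorem exists_eq_conj_companionGL (A : GL2) (hdet : (A : Matrix (Fin 2) (Fin 2) ℤ).det = 1)
    (htr : (A : Matrix (Fin 2) (Fin 2) ℤ).trace ^ 2 < 4) :
    ∃ P : GL2, A = P * companionGL (A : Matrix (Fin 2) (Fin 2) ℤ).trace * P⁻¹ := by
  set M := (A : Matrix (Fin 2) (Fin 2) ℤ)
  have hΔ : (M 1 1 - M 0 0) ^ 2 - 4 * M 1 0 * -M 0 1 = M.trace ^ 2 - 4 := by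
    rw [Matrix.det_fin_two] at hdet
    rw [Matrix.trace_fin_two]
    linear_combination (-4) * hdet
  obtain ⟨x, y, hxy⟩ :=
    exists_isUnit_quadForm (by rw [hΔ]; linarith [sq_nonneg M.trace]) (by rw [hΔ]; linarith)
  set P := Matrix.nonsingInvUnit _ ((det_cyclicBasis M ![x, y]).symm ▸ hxy)
  refine ⟨P, eq_mul_inv_of_mul_eq (Units.ext ?_)⟩
  rw [Units.val_mul]
  exact (mul_cyclicBasis_eq M ![x, y]).trans (by rw [hdet]; rfl)

theorem isStronglyReversible_of_det_eq_one_of_trace_sq_lt (A : GL2)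
    (hdet : (A : Matrix (Fin 2) (Fin 2) ℤ).det = 1)
    (htr : (A : Matrix (Fin 2) (Fin 2) ℤ).trace ^ 2 < 4) : IsStronglyReversible A := by
  obtain ⟨P, hP⟩ := exists_eq_conj_companionGL A hdet htr
  rw [hP]
  exact (isStronglyReversible_companionGL _).conj P

theorem act_mk (M : Matrix (Fin 2) (Fin 2) ℤ) (x : V) :
    act M x = ((Int.castRingHom ℝ).mapMatrix M *ᵥ x : V) := rfl

theorem act_mul (M N : Matrix (Fin 2) (Fin 2) ℤ) (z : T2) : act (M * N) z = act M (act N z) := by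
  induction z using QuotientAddGroup.induction_on
  rw [act_mk, act_mk, act_mk, map_mul, Matrix.mulVec_mulVec]

theorem act_one (z : T2) : act 1 z = z := by
  induction z using QuotientAddGroup.induction_on
  rw [act_mk, map_one, Matrix.one_mulVec]

theorem act_sub (M N : Matrix (Fin 2) (Fin 2) ℤ) (z : T2) : act (M - N) z = act M z - act N z := by
  induction z using QuotientAddGroup.induction_on
  rw [act_mk, act_mk, act_mk, map_sub, Matrix.sub_mulVec, QuotientAddGroup.mk_sub]

theorem act_surjective {M : Matrix (Fin 2) (Fin 2) ℤ} (hM : M.det ≠ 0) :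
    Function.Surjective (act M) := by
  intro z
  induction z using QuotientAddGroup.induction_on with | H x => ?_
  have hdet : IsUnit ((Int.castRingHom ℝ).mapMatrix M).det := by
    rw [← RingHom.map_det, isUnit_iff_ne_zero, eq_intCast]
    exact_mod_cast hM
  exact ⟨(((Int.castRingHom ℝ).mapMatrix M)⁻¹ *ᵥ x : V), by
    rw [act_mk, Matrix.mulVec_mulVec, Matrix.mul_nonsing_inv _ hdet, Matrix.one_mulVec]⟩

theorem act_units_mul (X Y : GL2) (z : T2) :
    act (X : Matrix (Fin 2) (Fin 2) ℤ) (act (Y : Matrix (Fin 2) (Fin 2) ℤ) z)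
      = act ((X * Y : GL2) : Matrix (Fin 2) (Fin 2) ℤ) z := by
  rw [Units.val_mul, act_mul]

/-- `(R, R v - v)` and `(A, (A - 1) v)` are the conjugates of `(R, 0)` and `(A, 0)` by the
translation by `-v`. -/
theorem exists_reversing_involution_lift {R A : GL2} (hR : R * R = 1) (hRA : R * A * R⁻¹ = A⁻¹)
    (v : T2) :
    ∃ h : GL2 × T2, Gmul h h = (1, 0) ∧
      Gmul (Gmul h (A, act ((A : Matrix (Fin 2) (Fin 2) ℤ) - 1) v)) (Ginv h)
        = Ginv (A, act ((A : Matrix (Fin 2) (Fin 2) ℤ) - 1) v) := by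
  refine ⟨(R, act R v - v), ?_, ?_⟩
  · simp only [Gmul, map_sub, act_units_mul, hR, Units.val_one, act_one, sub_add_sub_cancel,
      sub_self]
  · simp only [Gmul, Ginv, act_sub, act_one, map_neg, map_sub, act_units_mul, hRA,
      inv_mul_cancel, Units.val_one, Prod.mk.injEq, true_and]
    abel

/-- If `A ∈ GL(2,ℤ)` is elliptic (`0 ≤ tr(A)² < 4 det A`), then every `(A,ā)` is strongly
reversible in `G = GL(2,ℤ) ⋉ 𝕋²`. -/
theorem elliptic_strongly_reversible (A : GL2)
    (hell : 0 ≤ (Matrix.trace (A : Matrix (Fin 2) (Fin 2) ℤ)) ^ 2 ∧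
      (Matrix.trace (A : Matrix (Fin 2) (Fin 2) ℤ)) ^ 2 <
        4 * (A : Matrix (Fin 2) (Fin 2) ℤ).det) :
    ∀ a : T2, (∃ h : GL2 × T2, Gmul h h = (1, 0) ∧
      Gmul (Gmul h (A, a)) (Ginv h) = Ginv (A, a)) := by
  have hdet := det_eq_one_of_trace_sq_lt A hell.2
  have htr : (A : Matrix (Fin 2) (Fin 2) ℤ).trace ^ 2 < 4 := by simpa [hdet] using hell.2
  obtain ⟨R, hR, hRA⟩ := isStronglyReversible_of_det_eq_one_of_trace_sq_lt A hdet htr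
  have hsurj : Function.Surjective (act ((A : Matrix (Fin 2) (Fin 2) ℤ) - 1)) := by
    refine act_surjective ?_
    rw [det_sub_one_fin_two, hdet]
    nlinarith
  intro a
  obtain ⟨v, rfl⟩ := hsurj a
  exact exists_reversing_involution_lift hR hRA v
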